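/- Let n ≥ 2, let f : Fin n → Fin (n+1) be injective, let x : Fin (n+1) satisfy x ∉ Set.range f, and let i, k : Fin n with i ≠ k. Then there is no function h : Fin n → Fin (n+1) that is simultaneously exp-adjacent to f, to Function.update f i x, and to the constant function const (f k). (In the neighborhood complex this says N(f, f_i, <f(k)>) = ∅.) -/

import Mathlib

/-- `f` and `g` are adjacent in the exponential graph `K_m^{K_n}`:
for all `i ≠ j`, `f i ≠ g j`. -/
def ExpAdj {n m : ℕ} (f g : Fin n → Fin m) : Prop :=
  ∀ ⦃i j : Fin n⦄, i ≠ j → f i ≠ g j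

/-! An injection into a type with one more element, together with one point outside its range,
covers the codomain. Any common neighbour `h` of `f`, `Function.update f i x` and `const (f k)`
would have to avoid all of these values at the coordinate `k`. -/

theorem eq_or_mem_range_of_card_eq_succ {α β : Type*} [Fintype α] [Fintype β]
    (hcard : Fintype.card β = Fintype.card α + 1) {f : α → β} (hf : Function.Injective f)
    {x : β} (hx : x ∉ Set.range f) (y : β) : y = x ∨ y ∈ Set.range f := by
  classical
  have hx' : x ∉ Finset.univ.image f := by simpa using hx
  have hcover : insert x (Finset.univ.image f) = Finset.univ :=
    Finset.eq_univ_of_card _ <| by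
      rw [Finset.card_insert_of_notMem hx', Finset.card_image_of_injective _ hf,
        Finset.card_univ, hcard]
  have hy : y ∈ insert x (Finset.univ.image f) := hcover ▸ Finset.mem_univ y
  simpa using hy

namespace ExpAdj

variable {n m : ℕ} {h f : Fin n → Fin m}

theorem apply_notMem_range (hf : ExpAdj h f) {i k : Fin n} (hik : i ≠ k)
    (hconst : ExpAdj h fun _ => f k) : h k ∉ Set.range f := by
  rintro ⟨j, hj⟩
  rcases eq_or_ne j k with rfl | hjk
  · exact hconst hik.symm hj.symm
  · exact hf hjk.symm hj.symm

theorem apply_ne_of_update {i k : Fin n} {x : Fin m}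
    (hupd : ExpAdj h (Function.update f i x)) (hik : i ≠ k) : h k ≠ x := by
  simpa using hupd hik.symm

end ExpAdj

theorem stmt_8_general (n : ℕ) (f : Fin n → Fin (n + 1))
    (hf : Function.Injective f) (x : Fin (n + 1)) (hx : x ∉ Set.range f)
    (i k : Fin n) (hik : i ≠ k) :
    ¬ ∃ h : Fin n → Fin (n + 1),
        ExpAdj h f ∧ ExpAdj h (Function.update f i x) ∧
          ExpAdj h (fun _ => f k) := by
  rintro ⟨h, hadj, hupd, hconst⟩
  rcases eq_or_mem_range_of_card_eq_succ (by simp) hf hx (h k) with hkx | hkf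
  · exact hupd.apply_ne_of_update hik hkx
  · exact hadj.apply_notMem_range hik hconst hkf

theorem stmt_8 (n : ℕ) (hn : 2 ≤ n) (f : Fin n → Fin (n + 1))
    (hf : Function.Injective f) (x : Fin (n + 1)) (hx : x ∉ Set.range f)
    (i k : Fin n) (hik : i ≠ k) :
    ¬ ∃ h : Fin n → Fin (n + 1),
        ExpAdj h f ∧ ExpAdj h (Function.update f i x) ∧
          ExpAdj h (fun _ => f k) :=
  stmt_8_general n f hf x hx i k hik
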